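/- arXiv:1308.0543 — 2 statements merged into one kernel-verified Lean document; each statement's English description precedes it below -/
import Mathlib

section
/- The leapfrog-type map χ^δ = Θ₁^{δ/2} ∘ R^δ ∘ Θ₁^{δ/2} satisfies the growth bound: under ‖C∇Ψ(q)‖_s ≤ K(1 + ‖q‖_s), there exists c > 0 such that for all (q,v) ∈ H^s × H^s and 0 < δ < 1, ‖χ^δ(q,v)‖²_{s×s} ≤ (1 + cδ)‖(q,v)‖²_{s×s} + cδ, where ‖(q,v)‖²_{s×s} = ‖q‖_s² + ‖v‖_s². -/
/-- The rotation flow `R^δ (q,v) = (q cos δ + v sin δ, −q sin δ + v cos δ)`. -/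
noncomputable def rotFlow {H : Type*} [AddCommGroup H] [Module ℝ H]
    (t : ℝ) (z : H × H) : H × H :=
  (Real.cos t • z.1 + Real.sin t • z.2, -(Real.sin t • z.1) + Real.cos t • z.2)

/-- The half-kick map `Θ₁^{δ/2}(q,v) = (q, v − (δ/2)·g(q))`, where `g = C∇Ψ`. -/
noncomputable def halfKick {H : Type*} [AddCommGroup H] [Module ℝ H]
    (g : H → H) (t : ℝ) (z : H × H) : H × H :=
  (z.1, z.2 - (t / 2) • g z.1)

/-- The rotation preserves the sum of squared norms. -/
lemma rot_sq {H : Type*} [NormedAddCommGroup H] [InnerProductSpace ℝ H]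
    (t : ℝ) (a b : H) :
    ‖Real.cos t • a + Real.sin t • b‖^2 + ‖-(Real.sin t • a) + Real.cos t • b‖^2
      = ‖a‖^2 + ‖b‖^2 := by
  rw [norm_add_sq_real, norm_add_sq_real, ← neg_smul]
  rw [real_inner_smul_left, real_inner_smul_right,
      real_inner_smul_left, real_inner_smul_right]
  simp only [norm_smul, Real.norm_eq_abs, abs_neg, mul_pow, sq_abs]
  linear_combination (‖a‖^2 + ‖b‖^2) * Real.sin_sq_add_cos_sq t

/-- Scalar estimate for a half-kick step. -/
lemma kick_sq {a b f δ K : ℝ} (hf : 0 ≤ f)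
    (hK : 0 ≤ K) (hδ0 : 0 < δ) (hδ1 : δ < 1)
    (h : f ≤ b + δ / 2 * (K * (1 + a))) :
    f ^ 2 ≤ b ^ 2 + δ * (K + K ^ 2) * (1 + a ^ 2 + b ^ 2) := by
  have h2 : f ^ 2 ≤ (b + δ / 2 * (K * (1 + a))) ^ 2 := by
    have := mul_self_le_mul_self hf h
    nlinarith
  have hA : (1 + a) * b ≤ 1 + a ^ 2 + b ^ 2 := by
    nlinarith [sq_nonneg (1 + a - b), sq_nonneg (1 - a)]
  have hA' : δ * K * ((1 + a) * b) ≤ δ * K * (1 + a ^ 2 + b ^ 2) :=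
    mul_le_mul_of_nonneg_left hA (by positivity)
  have hB : (1 + a) ^ 2 ≤ 2 + 2 * a ^ 2 := by nlinarith [sq_nonneg (1 - a)]
  have hB' : δ ^ 2 * K ^ 2 / 4 * (1 + a) ^ 2 ≤ δ ^ 2 * K ^ 2 / 4 * (2 + 2 * a ^ 2) :=
    mul_le_mul_of_nonneg_left hB (by positivity)
  have h6 : (0:ℝ) ≤ δ - δ ^ 2 := by nlinarith
  have h7 : (0:ℝ) ≤ (δ - δ ^ 2) * K ^ 2 * (1 + a ^ 2) := by positivity
  have h8 : (0:ℝ) ≤ δ * K ^ 2 * b ^ 2 := by positivity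
  nlinarith [h2, hA', hB', h7, h8]

/-- Growth bound for the leapfrog-type map `χ^δ = Θ₁^{δ/2} ∘ R^δ ∘ Θ₁^{δ/2}`:
under `‖g(q)‖ ≤ K(1 + ‖q‖)` there is `c > 0` with
`‖χ^δ(q,v)‖²_{s×s} ≤ (1 + cδ)‖(q,v)‖²_{s×s} + cδ` for all `0 < δ < 1`. -/
theorem chi_growth_bound {H : Type*} [NormedAddCommGroup H]
    [InnerProductSpace ℝ H]
    (g : H → H) (K : ℝ) (hK : 0 ≤ K) (hg : ∀ q, ‖g q‖ ≤ K * (1 + ‖q‖)) :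
    ∃ c : ℝ, 0 < c ∧ ∀ (δ : ℝ), 0 < δ → δ < 1 → ∀ q v : H,
      ‖(halfKick g δ (rotFlow δ (halfKick g δ (q, v)))).1‖ ^ 2 +
          ‖(halfKick g δ (rotFlow δ (halfKick g δ (q, v)))).2‖ ^ 2 ≤
        (1 + c * δ) * (‖q‖ ^ 2 + ‖v‖ ^ 2) + c * δ := by
  set M := K + K ^ 2 with hMdef
  have hM0 : 0 ≤ M := by positivity
  clear_value M
  refine ⟨2 * M ^ 2 + 4 * M + 1, by positivity, ?_⟩
  intro δ hδ0 hδ1 q v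
  simp only [halfKick, rotFlow]
  set v1 := v - (δ / 2) • g q with hv1def
  set q2 := Real.cos δ • q + Real.sin δ • v1 with hq2def
  set v2 := -(Real.sin δ • q) + Real.cos δ • v1 with hv2def
  have hrot : ‖q2‖ ^ 2 + ‖v2‖ ^ 2 = ‖q‖ ^ 2 + ‖v1‖ ^ 2 := rot_sq δ q v1
  have hb1 : ‖v1‖ ≤ ‖v‖ + δ / 2 * (K * (1 + ‖q‖)) := by
    calc ‖v1‖ ≤ ‖v‖ + ‖(δ / 2) • g q‖ := norm_sub_le _ _
    _ ≤ ‖v‖ + δ / 2 * (K * (1 + ‖q‖)) := by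
        rw [norm_smul, Real.norm_eq_abs, abs_of_pos (by linarith)]
        have := hg q
        nlinarith
  have hb1sq : ‖v1‖ ^ 2 ≤ ‖v‖ ^ 2 + δ * M * (1 + ‖q‖ ^ 2 + ‖v‖ ^ 2) :=
    by rw [hMdef]; exact kick_sq (norm_nonneg _) hK hδ0 hδ1 hb1
  have hf : ‖v2 - (δ / 2) • g q2‖ ≤ ‖v2‖ + δ / 2 * (K * (1 + ‖q2‖)) := by
    calc ‖v2 - (δ / 2) • g q2‖ ≤ ‖v2‖ + ‖(δ / 2) • g q2‖ := norm_sub_le _ _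
    _ ≤ ‖v2‖ + δ / 2 * (K * (1 + ‖q2‖)) := by
        rw [norm_smul, Real.norm_eq_abs, abs_of_pos (by linarith)]
        have := hg q2
        nlinarith
  have hfsq : ‖v2 - (δ / 2) • g q2‖ ^ 2
      ≤ ‖v2‖ ^ 2 + δ * M * (1 + ‖q2‖ ^ 2 + ‖v2‖ ^ 2) :=
    by rw [hMdef]; exact kick_sq (norm_nonneg _) hK hδ0 hδ1 hf
  have hS2 : ‖q2‖ ^ 2 + ‖v2‖ ^ 2
      ≤ (‖q‖ ^ 2 + ‖v‖ ^ 2) + δ * M * (1 + ‖q‖ ^ 2 + ‖v‖ ^ 2) := by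
    rw [hrot]; linarith
  have h1 := mul_le_mul_of_nonneg_left hS2 (mul_nonneg hδ0.le hM0)
  have h2 : (0:ℝ) ≤ (δ - δ ^ 2) * M ^ 2 * (1 + (‖q‖ ^ 2 + ‖v‖ ^ 2)) := by
    have : (0:ℝ) ≤ δ - δ ^ 2 := by nlinarith
    positivity
  have h3 : (0:ℝ) ≤ δ * (M + 1) ^ 2 * (1 + (‖q‖ ^ 2 + ‖v‖ ^ 2)) := by positivity
  linarith [hfsq, hS2, h1, h2, h3]
end

section
/- Explicit formula for the proposal: integrating the splitting exactly, the proposal after one step satisfies q* = q cos δ + v' sin δ − (δ/2) sin δ · C∇Ψ(q) and v* = −q sin δ + v' cos δ − (δ/2) cos δ · C∇Ψ(q) − (δ/2) C∇Ψ(q*), and consequently ‖q* − q − δv'‖_s ≲ δ²(1 + ‖q‖_s + ‖v'‖_s) using |cos δ − 1| ≤ δ²/2, |sin δ − δ| ≤ δ³/6, |sin δ| ≤ δ, and ‖C∇Ψ(q)‖_s ≤ K(1 + ‖q‖_s). -/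
/-! Subtracting the free step `q + δ v'` from the proposal leaves
`(cos δ - 1) q + (sin δ - δ) v' - (δ/2) sin δ · C∇Ψ(q)`, and each of the three scalar
coefficients is `O(δ²)` by the Taylor bounds for `cos` and `sin`; the linear growth of
`C∇Ψ` turns the last term into `O(δ²(1 + ‖q‖))`. -/

open Real

lemma abs_cos_sub_one_le (x : ℝ) : |cos x - 1| ≤ x ^ 2 / 2 := by
  rw [abs_sub_comm, abs_of_nonneg (sub_nonneg.2 (cos_le_one x))]
  linarith [one_sub_sq_div_two_le_cos (x := x)]

lemma abs_half_mul_sin_le (x : ℝ) : |x / 2 * sin x| ≤ x ^ 2 / 2 := by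
  rw [abs_mul, abs_div, abs_two, ← sq_abs x]
  nlinarith [abs_sin_le_abs (x := x), abs_nonneg x]

lemma norm_splitting_step_sub_euler_le {H : Type*} [NormedAddCommGroup H] [NormedSpace ℝ H]
    (δ : ℝ) (q v w : H) :
    ‖cos δ • q + sin δ • v - (δ / 2 * sin δ) • w - q - δ • v‖
      ≤ δ ^ 2 / 2 * ‖q‖ + |δ| ^ 3 / 6 * ‖v‖ + δ ^ 2 / 2 * ‖w‖ := by
  have hsplit : cos δ • q + sin δ • v - (δ / 2 * sin δ) • w - q - δ • v =
      (cos δ - 1) • q + (sin δ - δ) • v - (δ / 2 * sin δ) • w := by module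
  calc _ = ‖(cos δ - 1) • q + (sin δ - δ) • v - (δ / 2 * sin δ) • w‖ := by rw [hsplit]
    _ ≤ ‖(cos δ - 1) • q‖ + ‖(sin δ - δ) • v‖ + ‖(δ / 2 * sin δ) • w‖ :=
      norm_sub_le_of_le (norm_add_le _ _) le_rfl
    _ = |cos δ - 1| * ‖q‖ + |sin δ - δ| * ‖v‖ + |δ / 2 * sin δ| * ‖w‖ := by
      simp only [norm_smul, Real.norm_eq_abs]
    _ ≤ _ := by
      gcongr
      · exact abs_cos_sub_one_le δ
      · exact abs_sub_comm (sin δ) δ ▸ abs_sub_sin_le δ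
      · exact abs_half_mul_sin_le δ

theorem proposal_q_increment_bound_general {H : Type*} [NormedAddCommGroup H]
    [NormedSpace ℝ H]
    (g : H → H) (K : ℝ) (hg : ∀ q, ‖g q‖ ≤ K * (1 + ‖q‖)) :
    ∃ C : ℝ, 0 < C ∧ ∀ (δ : ℝ), 0 < δ → δ < 1 → ∀ q v' qstar vstar : H,
      qstar = Real.cos δ • q + Real.sin δ • v' -
          (δ / 2 * Real.sin δ) • g q →
      vstar = -(Real.sin δ • q) + Real.cos δ • v' -
          (δ / 2 * Real.cos δ) • g q - (δ / 2) • g qstar →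
      ‖qstar - q - δ • v'‖ ≤ C * δ ^ 2 * (1 + ‖q‖ + ‖v'‖) := by
  have hK : 0 ≤ K := by simpa using (norm_nonneg _).trans (hg 0)
  refine ⟨1 + K, by linarith, fun δ hδ hδ1 q v' qstar vstar hq _ => ?_⟩
  have hcube : |δ| ^ 3 / 6 ≤ δ ^ 2 := by rw [abs_of_pos hδ]; nlinarith
  have hq0 := norm_nonneg q
  have hv0 := norm_nonneg v'
  rw [hq]
  calc _ ≤ δ ^ 2 / 2 * ‖q‖ + |δ| ^ 3 / 6 * ‖v'‖ + δ ^ 2 / 2 * (K * (1 + ‖q‖)) :=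
        (norm_splitting_step_sub_euler_le δ q v' (g q)).trans (by gcongr; exact hg q)
    _ ≤ (1 + K) * δ ^ 2 * (1 + ‖q‖ + ‖v'‖) := by
      have hδK := mul_nonneg (sq_nonneg δ) hK
      linarith [mul_le_mul_of_nonneg_right hcube hv0, mul_nonneg (sq_nonneg δ) hq0,
        mul_nonneg hδK hq0, mul_nonneg hδK hv0, sq_nonneg δ]

/-- For the exactly integrated splitting proposal
`q* = q cos δ + v' sin δ − (δ/2) sin δ · C∇Ψ(q)` (with
`v* = −q sin δ + v' cos δ − (δ/2) cos δ · C∇Ψ(q) − (δ/2) C∇Ψ(q*)`), under the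
linear growth bound `‖C∇Ψ(q)‖ ≤ K(1 + ‖q‖)` one has
`‖q* − q − δ v'‖ ≲ δ²(1 + ‖q‖ + ‖v'‖)` uniformly in `δ ∈ (0,1)`. -/
theorem proposal_q_increment_bound {H : Type*} [NormedAddCommGroup H]
    [NormedSpace ℝ H]
    (g : H → H) (K : ℝ) (hK : 0 ≤ K) (hg : ∀ q, ‖g q‖ ≤ K * (1 + ‖q‖)) :
    ∃ C : ℝ, 0 < C ∧ ∀ (δ : ℝ), 0 < δ → δ < 1 → ∀ q v' qstar vstar : H,
      qstar = Real.cos δ • q + Real.sin δ • v' -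
          (δ / 2 * Real.sin δ) • g q →
      vstar = -(Real.sin δ • q) + Real.cos δ • v' -
          (δ / 2 * Real.cos δ) • g q - (δ / 2) • g qstar →
      ‖qstar - q - δ • v'‖ ≤ C * δ ^ 2 * (1 + ‖q‖ + ‖v'‖) :=
  proposal_q_increment_bound_general g K hg
end
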